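/- Assume the field hypotheses. Let f be a continuous real-valued function defined on [a, b] ∪ [1/b, 1/a] such that f(x)·f(1/x) ≤ 1 for all x ∈ [a, b], and suppose that either f([a, b]) ⊆ [a, b] or f([a, b]) ⊆ [1/b, 1/a]. Then (∫_Ω W_t^{1/2} f(A_t) W_t^{1/2} dμ(t)) ⊗_s (∫_Ω W_t^{1/2} f(A_t⁻¹) W_t^{1/2} dμ(t)) ≤ ((a² + b²)/(2ab)) · (∫_Ω W_t dμ(t))^{⊗2}, where f(A_t) and f(A_t⁻¹) are defined by the functional calculus for Hermitian matrices (the spectrum of A_t lies in [a, b] and that of A_t⁻¹ in [1/b, 1/a]). -/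

import Mathlib

open Matrix MeasureTheory
open scoped Kronecker ComplexOrder

attribute [local instance] Matrix.frobeniusNormedAddCommGroup Matrix.frobeniusNormedSpace

/-- Symmetrized Kronecker tensor product: `X ⊗ₛ Y = (1/2)(X ⊗ Y + Y ⊗ X)`. -/
noncomputable def symKron {k : ℕ} (X Y : Matrix (Fin k) (Fin k) ℂ) :
    Matrix (Fin k × Fin k) (Fin k × Fin k) ℂ :=
  ((1 : ℂ) / 2) • (X ⊗ₖ Y + Y ⊗ₖ X)

/-- The positive semidefinite square root of a positive semidefinite matrix
(the definition `Matrix.PosSemidef.sqrt` of the older Mathlib, since removed). -/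
noncomputable def Matrix.PosSemidef.sqrt {n : Type*} {𝕜 : Type*} [Fintype n] [DecidableEq n]
    [RCLike 𝕜] {A : Matrix n n 𝕜} (hA : A.PosSemidef) : Matrix n n 𝕜 :=
  hA.1.eigenvectorUnitary.1 * diagonal ((↑) ∘ (√·) ∘ hA.1.eigenvalues) *
  (star hA.1.eigenvectorUnitary : Matrix n n 𝕜)

/-!
For fixed `s, t`, the matrices `f(A_s) ⊗ f(A_t⁻¹)` and `f(A_s⁻¹) ⊗ f(A_t)` are diagonal in the
tensor product of eigenbases of `A_s` and `A_t`, with eigenvalues `f(x) f(1/y)` and `f(1/x) f(y)`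
for eigenvalues `x, y ∈ [a, b]`. As `f(1/z) ≤ 1/f(z)` and `f` takes values in an interval
`[α, β]` with `(α² + β²)/(αβ) = (a² + b²)/(ab)`, the scalar Kantorovich inequality
`u/v + v/u ≤ (α² + β²)/(αβ)` bounds their sum. Conjugating by `W_s^{1/2} ⊗ W_t^{1/2}` and
integrating in `(s, t)` gives the claim, since the tensor product of two integrals is the double
integral of the tensor products. If one of the integrands is not integrable, its Bochner integral
is `0` and only `(∫ W) ⊗ (∫ W) ≥ 0` remains.
-/

open Set

-- `Matrix` has its own product topology, which the Frobenius norm induces only up to unfolding,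
-- so instance search does not find the `ContinuousENorm` that integrability of matrices needs.
noncomputable instance Matrix.frobeniusContinuousENorm {m n 𝕜 : Type*} [Fintype m] [Fintype n]
    [RCLike 𝕜] : ContinuousENorm (Matrix m n 𝕜) :=
  SeminormedAddGroup.toContinuousENorm

theorem div_add_div_le_of_mem_Icc {α β v x : ℝ} (hα : 0 < α) (hv : v ∈ Icc α β)
    (hx : x ∈ Icc α β) : v / x + x / v ≤ (α ^ 2 + β ^ 2) / (α * β) := by
  obtain ⟨hαv, hvβ⟩ := hv
  obtain ⟨hαx, hxβ⟩ := hx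
  have hv0 : 0 < v := hα.trans_le hαv
  have hx0 : 0 < x := hα.trans_le hαx
  have key : 0 ≤ (β * v - α * x) * (β * x - α * v) :=
    mul_nonneg (by nlinarith) (by nlinarith)
  rw [div_add_div _ _ hx0.ne' hv0.ne', div_le_div_iff₀ (by positivity) (by nlinarith)]
  nlinarith

theorem mul_add_mul_le_of_le_inv {α β v w x y : ℝ} (hα : 0 < α) (hv : v ∈ Icc α β)
    (hx : x ∈ Icc α β) (hw : w ≤ v⁻¹) (hy : y ≤ x⁻¹) :
    v * y + w * x ≤ (α ^ 2 + β ^ 2) / (α * β) :=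
  calc v * y + w * x ≤ v * x⁻¹ + v⁻¹ * x := by
        have := hα.trans_le hv.1
        have := hα.trans_le hx.1
        gcongr
    _ ≤ _ := by simpa [div_eq_mul_inv, mul_comm] using div_add_div_le_of_mem_Icc hα hv hx

theorem mul_apply_inv_add_apply_inv_mul_le {a b : ℝ} (ha : 0 < a) (hab : a ≤ b) {f : ℝ → ℝ}
    (hf_one : ∀ x ∈ Icc a b, f x * f (1 / x) ≤ 1)
    (hf_maps : MapsTo f (Icc a b) (Icc a b) ∨ MapsTo f (Icc a b) (Icc (1 / b) (1 / a)))
    {x y : ℝ} (hx : x ∈ Icc a b) (hy : y ∈ Icc a b) :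
    f x * f y⁻¹ + f x⁻¹ * f y ≤ (a ^ 2 + b ^ 2) / (a * b) := by
  have hb : 0 < b := ha.trans_le hab
  obtain ⟨α, β, hα, hαβ, hfαβ⟩ : ∃ α β : ℝ, 0 < α ∧
      (α ^ 2 + β ^ 2) / (α * β) = (a ^ 2 + b ^ 2) / (a * b) ∧ MapsTo f (Icc a b) (Icc α β) := by
    rcases hf_maps with h | h
    · exact ⟨a, b, ha, rfl, h⟩
    · exact ⟨1 / b, 1 / a, by positivity, by field_simp, h⟩
  have hinv z (hz : z ∈ Icc a b) : f z⁻¹ ≤ (f z)⁻¹ := by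
    rw [← mul_one (f z)⁻¹, le_inv_mul_iff₀ (hα.trans_le (hfαβ hz).1), ← one_div]
    exact hf_one z hz
  rw [← hαβ]
  exact mul_add_mul_le_of_le_inv hα (hfαβ hx) (hfαβ hy) (hinv x hx) (hinv y hy)

namespace Matrix

variable {m n 𝕜 : Type*} [Fintype m] [DecidableEq m] [Fintype n] [DecidableEq n] [RCLike 𝕜]

theorem posSemidef_smul_one_sub_conj_diagonal {Q : Matrix n n 𝕜} (hQ : Q ∈ unitaryGroup n 𝕜)
    {d : n → ℝ} {c : ℝ} (hd : ∀ i, d i ≤ c) :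
    (c • 1 - Q * diagonal (fun i => (d i : 𝕜)) * star Q).PosSemidef := by
  have hc : c • (1 : Matrix n n 𝕜) = Q * (c • 1) * star Q := by
    rw [mul_smul_comm, mul_one, smul_mul_assoc, Unitary.mul_star_self_of_mem hQ]
  have hdiag : c • (1 : Matrix n n 𝕜) - diagonal (fun i => (d i : 𝕜)) =
      diagonal (fun i => ((c - d i : ℝ) : 𝕜)) := by
    ext i j
    rcases eq_or_ne i j with rfl | h
    · simp [RCLike.real_smul_eq_coe_mul]
    · simp [h]
  rw [hc, ← sub_mul, ← mul_sub, hdiag, star_eq_conjTranspose]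
  refine PosSemidef.mul_mul_conjTranspose_same (PosSemidef.diagonal fun i => ?_) Q
  simpa using hd i

theorem IsHermitian.cfc_kronecker_cfc {A : Matrix m m 𝕜} {B : Matrix n n 𝕜}
    (hA : A.IsHermitian) (hB : B.IsHermitian) (f g : ℝ → ℝ) :
    cfc f A ⊗ₖ cfc g B = (hA.eigenvectorUnitary.1 ⊗ₖ hB.eigenvectorUnitary.1) *
      diagonal (fun p => ((f (hA.eigenvalues p.1) * g (hB.eigenvalues p.2) : ℝ) : 𝕜)) *
      star (hA.eigenvectorUnitary.1 ⊗ₖ hB.eigenvectorUnitary.1) := by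
  rw [hA.cfc_eq, hB.cfc_eq, IsHermitian.cfc, IsHermitian.cfc, Unitary.conjStarAlgAut_apply,
    Unitary.conjStarAlgAut_apply, mul_kronecker_mul, mul_kronecker_mul, diagonal_kronecker_diagonal,
    star_eq_conjTranspose, star_eq_conjTranspose, star_eq_conjTranspose, conjTranspose_kronecker]
  simp only [Function.comp_apply, RCLike.ofReal_mul]

theorem IsHermitian.posSemidef_smul_one_sub_cfc_kronecker_cfc {A : Matrix m m 𝕜}
    {B : Matrix n n 𝕜} (hA : A.IsHermitian) (hB : B.IsHermitian) {s t : Set ℝ}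
    (hAs : spectrum ℝ A ⊆ s) (hBt : spectrum ℝ B ⊆ t) {f g : ℝ → ℝ} {c : ℝ}
    (hfg : ∀ x ∈ s, ∀ y ∈ t, f x * g y + g x * f y ≤ c) :
    (c • 1 - cfc f A ⊗ₖ cfc g B - cfc g A ⊗ₖ cfc f B).PosSemidef := by
  rw [sub_sub, hA.cfc_kronecker_cfc hB, hA.cfc_kronecker_cfc hB, ← add_mul, ← mul_add,
    diagonal_add]
  simp only [← RCLike.ofReal_add]
  exact posSemidef_smul_one_sub_conj_diagonal
    (kronecker_mem_unitary (SetLike.coe_mem _) (SetLike.coe_mem _)) fun p =>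
    hfg _ (hAs (hA.eigenvalues_mem_spectrum_real p.1)) _
      (hBt (hB.eigenvalues_mem_spectrum_real p.2))

theorem PosSemidef.conj_kronecker_sub {S₁ X₁ Y₁ : Matrix m m 𝕜} {S₂ X₂ Y₂ : Matrix n n 𝕜}
    (hS₁ : S₁.IsHermitian) (hS₂ : S₂.IsHermitian) {c : ℝ}
    (h : (c • 1 - X₁ ⊗ₖ Y₂ - Y₁ ⊗ₖ X₂).PosSemidef) :
    (c • ((S₁ * S₁) ⊗ₖ (S₂ * S₂)) - (S₁ * X₁ * S₁) ⊗ₖ (S₂ * Y₂ * S₂)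
      - (S₁ * Y₁ * S₁) ⊗ₖ (S₂ * X₂ * S₂)).PosSemidef := by
  convert h.mul_mul_conjTranspose_same (S₁ ⊗ₖ S₂) using 1
  simp only [conjTranspose_kronecker, hS₁.eq, hS₂.eq, mul_sub, sub_mul, mul_smul_comm,
    smul_mul_assoc, mul_one, mul_kronecker_mul]

theorem PosSemidef.sqrt_eq_cfc {A : Matrix n n 𝕜} (hA : A.PosSemidef) :
    hA.sqrt = cfc Real.sqrt A := by
  rw [hA.1.cfc_eq]
  rfl

theorem PosSemidef.isHermitian_sqrt {A : Matrix n n 𝕜} (hA : A.PosSemidef) :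
    hA.sqrt.IsHermitian := by
  rw [hA.sqrt_eq_cfc]
  exact cfc_predicate _ _

theorem PosSemidef.sqrt_mul_sqrt {A : Matrix n n 𝕜} (hA : A.PosSemidef) :
    hA.sqrt * hA.sqrt = A := by
  rw [hA.sqrt_eq_cfc, ← cfc_mul _ _ A (A.finite_real_spectrum.continuousOn _)
    (A.finite_real_spectrum.continuousOn _)]
  conv_rhs => rw [← cfc_id' ℝ A hA.1]
  refine cfc_congr fun x hx => Real.mul_self_sqrt ?_
  rw [hA.1.spectrum_real_eq_range_eigenvalues] at hx
  obtain ⟨i, rfl⟩ := hx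
  exact hA.eigenvalues_nonneg i

theorem IsHermitian.cfc_inv {A : Matrix n n 𝕜} (hA : A.IsHermitian) (hA0 : 0 ∉ spectrum ℝ A)
    (f : ℝ → ℝ) : cfc f A⁻¹ = cfc (fun x => f x⁻¹) A := by
  obtain ⟨u, rfl⟩ := spectrum.isUnit_of_zero_notMem ℝ hA0
  rw [← coe_units_inv]
  exact (cfc_comp_inv f u
    (((u : Matrix n n 𝕜).finite_real_spectrum.image _).continuousOn _) hA).symm

open scoped MatrixOrder in
theorem IsHermitian.spectrum_subset_Icc {A : Matrix n n 𝕜} (hA : A.IsHermitian) {a b : ℝ}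
    (ha : (A - a • 1).PosSemidef) (hb : (b • 1 - A).PosSemidef) : spectrum ℝ A ⊆ Icc a b := by
  intro x hx
  rw [Algebra.smul_def, mul_one] at ha hb
  exact ⟨(algebraMap_le_iff_le_spectrum hA).1 ha x hx, (le_algebraMap_iff_spectrum_le hA).1 hb x hx⟩

end Matrix

section Integral

variable {α β : Type*} [MeasurableSpace α] [MeasurableSpace β] {μ : Measure α} {ν : Measure β}
  {n 𝕜 : Type*} [Fintype n] [RCLike 𝕜]

theorem Matrix.PosSemidef.integral {M : α → Matrix n n 𝕜} (hM : Integrable M μ)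
    (h : ∀ t, (M t).PosSemidef) : (∫ t, M t ∂μ).PosSemidef := by
  rw [posSemidef_iff_dotProduct_mulVec]
  refine ⟨?_, fun x => ?_⟩
  · have hstar : star (∫ t, M t ∂μ) = ∫ t, star (M t) ∂μ :=
      ((starL' ℝ : Matrix n n 𝕜 ≃L[ℝ] _).integral_comp_comm M).symm
    change star _ = _
    rw [hstar]
    exact integral_congr_ae (ae_of_all _ fun t => (h t).1)
  · let q : Matrix n n 𝕜 →L[ℝ] 𝕜 := LinearMap.toContinuousLinearMap
      { toFun N := star x ⬝ᵥ N *ᵥ x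
        map_add' N N' := by simp [add_mulVec]
        map_smul' r N := by simp [smul_mulVec] }
    have hq : ∫ t, q (M t) ∂μ = q (∫ t, M t ∂μ) := q.integral_comp_comm hM
    change 0 ≤ q _
    rw [← hq]
    exact integral_nonneg fun t => (h t).dotProduct_mulVec_nonneg x

theorem Matrix.PosSemidef.apply_integral_integral {E F : Type*} [NormedAddCommGroup E]
    [NormedSpace ℝ E] [CompleteSpace E] [NormedAddCommGroup F] [NormedSpace ℝ F]
    [CompleteSpace F] (B : E →L[ℝ] F →L[ℝ] Matrix n n 𝕜) {u : α → E} {v : β → F}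
    (hu : Integrable u μ) (hv : Integrable v ν) (h : ∀ s t, (B (u s) (v t)).PosSemidef) :
    (B (∫ s, u s ∂μ) (∫ t, v t ∂ν)).PosSemidef := by
  have hinner s : (B (u s) (∫ t, v t ∂ν)).PosSemidef := by
    have e : ∫ t, B (u s) (v t) ∂ν = B (u s) (∫ t, v t ∂ν) := (B (u s)).integral_comp_comm hv
    exact e ▸ .integral ((B (u s)).integrable_comp hv) (h s)
  have e : ∫ s, B (u s) (∫ t, v t ∂ν) ∂μ = B (∫ s, u s ∂μ) (∫ t, v t ∂ν) :=
    (B.flip _).integral_comp_comm hu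
  exact e ▸ .integral ((B.flip _).integrable_comp hu) hinner

theorem Matrix.PosSemidef.smul_integral_kronecker_sub {W F G : α → Matrix n n ℂ}
    (hW : Integrable W μ) (hF : Integrable F μ) (hG : Integrable G μ) {c : ℝ}
    (h : ∀ s t, (c • (W s ⊗ₖ W t) - F s ⊗ₖ G t - G s ⊗ₖ F t).PosSemidef) :
    (c • ((∫ t, W t ∂μ) ⊗ₖ (∫ t, W t ∂μ)) - (∫ t, F t ∂μ) ⊗ₖ (∫ t, G t ∂μ)
      - (∫ t, G t ∂μ) ⊗ₖ (∫ t, F t ∂μ)).PosSemidef := by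
  let K : Matrix n n ℂ →L[ℝ] Matrix n n ℂ →L[ℝ] Matrix (n × n) (n × n) ℂ :=
    LinearMap.toContinuousLinearMap
      (LinearMap.toContinuousLinearMap.toLinearMap ∘ₗ kroneckerBilinear (R := ℝ))
  let π₁ := ContinuousLinearMap.fst ℝ (Matrix n n ℂ) (Matrix n n ℂ × Matrix n n ℂ)
  let π₂ := (ContinuousLinearMap.fst ℝ (Matrix n n ℂ) (Matrix n n ℂ)).comp
    (ContinuousLinearMap.snd ℝ (Matrix n n ℂ) (Matrix n n ℂ × Matrix n n ℂ))
  let π₃ := (ContinuousLinearMap.snd ℝ (Matrix n n ℂ) (Matrix n n ℂ)).comp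
    (ContinuousLinearMap.snd ℝ (Matrix n n ℂ) (Matrix n n ℂ × Matrix n n ℂ))
  let B := c • K.bilinearComp π₁ π₁ - K.bilinearComp π₂ π₃ - K.bilinearComp π₃ π₂
  have hu := hW.prodMk (hF.prodMk hG)
  have := apply_integral_integral B hu hu h
  rwa [integral_pair hW (hF.prodMk hG), integral_pair hF hG] at this

end Integral

theorem smul_kronecker_sub_symKron {k : ℕ} (c : ℝ) (Z X Y : Matrix (Fin k) (Fin k) ℂ) :
    (c / 2) • (Z ⊗ₖ Z) - symKron X Y = (1 / 2 : ℝ) • (c • (Z ⊗ₖ Z) - X ⊗ₖ Y - Y ⊗ₖ X) := by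
  rw [symKron]
  module

theorem kantorovich_integral_tensor_f_general {k : ℕ} {Ω : Type*} [MeasurableSpace Ω]
    (μ : Measure Ω) (a b : ℝ) (ha : 0 < a) (hab : a ≤ b)
    (A W : Ω → Matrix (Fin k) (Fin k) ℂ)
    (hWmeas : AEStronglyMeasurable W μ)
    (hAherm : ∀ t, (A t).IsHermitian)
    (hAa : ∀ t, (A t - a • 1).PosSemidef)
    (hAb : ∀ t, ((b • 1 : Matrix (Fin k) (Fin k) ℂ) - A t).PosSemidef)
    (hW : ∀ t, (W t).PosSemidef)
    (hWint : Integrable (fun t => ‖W t‖) μ)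
    (f : ℝ → ℝ)
    (hf_one : ∀ x ∈ Set.Icc a b, f x * f (1 / x) ≤ 1)
    (hf_maps : Set.MapsTo f (Set.Icc a b) (Set.Icc a b) ∨
      Set.MapsTo f (Set.Icc a b) (Set.Icc (1 / b) (1 / a))) :
    (((a ^ 2 + b ^ 2) / (2 * a * b)) • ((∫ t, W t ∂μ) ⊗ₖ (∫ t, W t ∂μ))
      - symKron (∫ t, (hW t).sqrt * cfc f (A t) * (hW t).sqrt ∂μ)
          (∫ t, (hW t).sqrt * cfc f ((A t)⁻¹) * (hW t).sqrt ∂μ)).PosSemidef := by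
  have hb : 0 < b := ha.trans_le hab
  have hspec t : spectrum ℝ (A t) ⊆ Icc a b := (hAherm t).spectrum_subset_Icc (hAa t) (hAb t)
  have hinv t : cfc f (A t)⁻¹ = cfc (fun x => f x⁻¹) (A t) :=
    (hAherm t).cfc_inv (fun h0 => absurd (hspec t h0).1 (not_le.2 ha)) f
  simp_rw [hinv, show (a ^ 2 + b ^ 2) / (2 * a * b) = (a ^ 2 + b ^ 2) / (a * b) / 2 by ring]
  have hWi : Integrable W μ := (integrable_norm_iff hWmeas).1 hWint
  by_cases hFG : Integrable (fun t => (hW t).sqrt * cfc f (A t) * (hW t).sqrt) μ ∧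
      Integrable (fun t => (hW t).sqrt * cfc (fun x => f x⁻¹) (A t) * (hW t).sqrt) μ
  · have hpt s t := ((hAherm s).posSemidef_smul_one_sub_cfc_kronecker_cfc (hAherm t) (hspec s)
      (hspec t) fun x hx y hy => mul_apply_inv_add_apply_inv_mul_le ha hab hf_one hf_maps hx hy
      ).conj_kronecker_sub (hW s).isHermitian_sqrt (hW t).isHermitian_sqrt
    simp only [PosSemidef.sqrt_mul_sqrt] at hpt
    rw [smul_kronecker_sub_symKron]
    exact (PosSemidef.smul_integral_kronecker_sub hWi hFG.1 hFG.2 hpt).smul (by norm_num)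
  · have hZ := PosSemidef.integral hWi hW
    have : symKron (∫ t, (hW t).sqrt * cfc f (A t) * (hW t).sqrt ∂μ)
        (∫ t, (hW t).sqrt * cfc (fun x => f x⁻¹) (A t) * (hW t).sqrt ∂μ) = 0 := by
      rcases not_and_or.1 hFG with h | h <;> simp [symKron, integral_undef h]
    rw [this, sub_zero]
    exact (hZ.kronecker hZ).smul (by positivity)

/-- Theorem 5.1: Kantorovich type integral inequality for `f(A_t)` and `f(A_t⁻¹)`, where
`f` is continuous on `[a,b] ∪ [1/b, 1/a]`, satisfies `f(x)f(1/x) ≤ 1` on `[a,b]`, and maps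
`[a,b]` into `[a,b]` or into `[1/b, 1/a]`. -/
theorem kantorovich_integral_tensor_f {k : ℕ} {Ω : Type*} [MeasurableSpace Ω]
    (μ : Measure Ω) [IsFiniteMeasure μ] (a b : ℝ) (ha : 0 < a) (hab : a ≤ b)
    (A W : Ω → Matrix (Fin k) (Fin k) ℂ)
    (hAmeas : AEStronglyMeasurable A μ) (hWmeas : AEStronglyMeasurable W μ)
    (hAherm : ∀ t, (A t).IsHermitian)
    (hAa : ∀ t, (A t - a • 1).PosSemidef)
    (hAb : ∀ t, ((b • 1 : Matrix (Fin k) (Fin k) ℂ) - A t).PosSemidef)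
    (hW : ∀ t, (W t).PosSemidef)
    (hWint : Integrable (fun t => ‖W t‖) μ)
    (f : ℝ → ℝ)
    (hf_cont : ContinuousOn f (Set.Icc a b ∪ Set.Icc (1 / b) (1 / a)))
    (hf_one : ∀ x ∈ Set.Icc a b, f x * f (1 / x) ≤ 1)
    (hf_maps : Set.MapsTo f (Set.Icc a b) (Set.Icc a b) ∨
      Set.MapsTo f (Set.Icc a b) (Set.Icc (1 / b) (1 / a))) :
    (((a ^ 2 + b ^ 2) / (2 * a * b)) • ((∫ t, W t ∂μ) ⊗ₖ (∫ t, W t ∂μ))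
      - symKron (∫ t, (hW t).sqrt * cfc f (A t) * (hW t).sqrt ∂μ)
          (∫ t, (hW t).sqrt * cfc f ((A t)⁻¹) * (hW t).sqrt ∂μ)).PosSemidef :=
  kantorovich_integral_tensor_f_general μ a b ha hab A W hWmeas hAherm hAa hAb hW hWint f hf_one
    hf_maps
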